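/- Fix l ∈ [4] and let H_l be the subgroup of G generated by π_{(il)} for the three elements i ∈ [4] \ {l}. For distinct i,j,k ∈ [4] \ {l}, let Γ₄³(ijk) be the set of γ ∈ Γ₄³ with o_γ({i,j,k}) = (ijk). Then Γ₄³(ijk) is an orbit of H_l of size 4. -/

import Mathlib

/-! Γ₄³(ijk) consists of the cyclic class of (ijk) and, on each of the three 3-sets
containing `l`, the orientation inducing (ijk). Each generator acts on cyclic classes as an
involution, so being joined by a word in the generators of `H_l` is an equivalence relation on
distinct triples, and every element of Γ₄³(ijk) is reached from (ijk) by a word of length at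
most two. The statements about single generators concern finitely many triples and are checked
by evaluation. -/

abbrev Triple := Fin 4 × Fin 4 × Fin 4

def rot (t : Triple) : Triple := (t.2.1, t.2.2, t.1)

def DistinctTriple (t : Triple) : Prop := t.1 ≠ t.2.1 ∧ t.1 ≠ t.2.2 ∧ t.2.1 ≠ t.2.2

def cyc (t u : Triple) : Prop := u = t ∨ u = rot t ∨ u = rot (rot t)

def fourth (t : Triple) : Fin 4 := 2 - (t.1 + t.2.1 + t.2.2)

def oRaw (t : Triple) (s : Finset (Fin 4)) : Triple :=
  if s = {t.1, t.2.1, t.2.2} then t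
  else if s = {t.1, t.2.1, fourth t} then (t.1, t.2.1, fourth t)
  else if s = {t.2.1, t.2.2, fourth t} then (t.2.1, t.2.2, fourth t)
  else (t.2.2, t.1, fourth t)

def piRaw (s : Finset (Fin 4)) (t : Triple) : Triple :=
  if s = {t.1, t.2.1} then (t.2.1, t.1, fourth t)
  else if s = {t.2.1, t.2.2} then (t.2.2, t.2.1, fourth t)
  else if s = {t.1, t.2.2} then (t.1, t.2.2, fourth t)
  else if s = {t.2.2, fourth t} then (t.1, t.2.1, fourth t)
  else if s = {t.2.1, fourth t} then (t.2.2, t.1, fourth t)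
  else if s = {t.1, fourth t} then (t.2.1, t.2.2, fourth t)
  else t

def word (L : List (Finset (Fin 4))) (t : Triple) : Triple := L.foldr piRaw t

/-- a word in the generators `π_{(pl)}` of the subgroup `H_l` -/
def ValidWordH (l : Fin 4) (L : List (Finset (Fin 4))) : Prop :=
  ∀ s ∈ L, ∃ p : Fin 4, p ≠ l ∧ s = {p, l}

/-- membership in `Γ₄³(ijk) = {γ : o_γ({i,j,k}) = (ijk)}` -/
def InGamma (i j k : Fin 4) (t : Triple) : Prop :=
  DistinctTriple t ∧ cyc (oRaw t {i, j, k}) (i, j, k)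

instance (t : Triple) : Decidable (DistinctTriple t) := by unfold DistinctTriple; infer_instance

instance (t u : Triple) : Decidable (cyc t u) := by unfold cyc; infer_instance

instance (i j k : Fin 4) (t : Triple) : Decidable (InGamma i j k t) := by
  unfold InGamma; infer_instance

theorem cyc_refl (t : Triple) : cyc t t := Or.inl rfl

theorem cyc_symm {t u : Triple} (h : cyc t u) : cyc u t := by
  rcases h with rfl | rfl | rfl
  · exact cyc_refl _
  · exact Or.inr (Or.inr rfl)
  · exact Or.inr (Or.inl rfl)

theorem cyc_trans {t u v : Triple} (htu : cyc t u) (huv : cyc u v) : cyc t v := by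
  rcases htu with rfl | rfl | rfl <;> rcases huv with rfl | rfl | rfl <;>
    first | exact Or.inl rfl | exact Or.inr (Or.inl rfl) | exact Or.inr (Or.inr rfl)

theorem DistinctTriple.rot {t : Triple} (ht : DistinctTriple t) : DistinctTriple (rot t) :=
  ⟨ht.2.2, ht.1.symm, ht.2.1.symm⟩

theorem DistinctTriple.piRaw (s : Finset (Fin 4)) {t : Triple} (ht : DistinctTriple t) :
    DistinctTriple (piRaw s t) := by
  revert s t; decide +kernel

theorem cyc_piRaw_rot (s : Finset (Fin 4)) {t : Triple} (ht : DistinctTriple t) :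
    cyc (piRaw s t) (piRaw s (rot t)) := by
  revert s t; decide +kernel

theorem cyc_piRaw_piRaw (s : Finset (Fin 4)) {t : Triple} (ht : DistinctTriple t) :
    cyc (piRaw s (piRaw s t)) t := by
  revert s t; decide +kernel

theorem cyc_piRaw (s : Finset (Fin 4)) {t u : Triple} (ht : DistinctTriple t) (h : cyc t u) :
    cyc (piRaw s t) (piRaw s u) := by
  rcases h with rfl | rfl | rfl
  · exact cyc_refl _
  · exact cyc_piRaw_rot s ht
  · exact cyc_trans (cyc_piRaw_rot s ht) (cyc_piRaw_rot s ht.rot)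

theorem word_append (L M : List (Finset (Fin 4))) (t : Triple) :
    word (L ++ M) t = word L (word M t) :=
  List.foldr_append

theorem DistinctTriple.word (L : List (Finset (Fin 4))) {t : Triple} (ht : DistinctTriple t) :
    DistinctTriple (word L t) := by
  induction L with
  | nil => exact ht
  | cons s L ih => exact ih.piRaw s

theorem cyc_word (L : List (Finset (Fin 4))) {t u : Triple} (ht : DistinctTriple t)
    (h : cyc t u) : cyc (word L t) (word L u) := by
  induction L with
  | nil => exact h
  | cons s L ih => exact cyc_piRaw s (ht.word L) ih

theorem cyc_word_reverse_word (L : List (Finset (Fin 4))) {t : Triple} (ht : DistinctTriple t) :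
    cyc (word L.reverse (word L t)) t := by
  induction L with
  | nil => exact cyc_refl t
  | cons s L ih =>
    rw [List.reverse_cons, word_append]
    have hL := ht.word L
    exact cyc_trans (cyc_word _ ((hL.piRaw s).piRaw s) (cyc_piRaw_piRaw s hL)) ih

section ValidWordH

variable {l : Fin 4} {L M : List (Finset (Fin 4))}

theorem validWordH_nil : ValidWordH l [] := fun _ hs => absurd hs List.not_mem_nil

theorem ValidWordH.cons {p : Fin 4} (hp : p ≠ l) (hL : ValidWordH l L) :
    ValidWordH l ({p, l} :: L) := by
  intro s hs
  rcases List.mem_cons.mp hs with rfl | hs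
  · exact ⟨p, hp, rfl⟩
  · exact hL s hs

theorem ValidWordH.append (hL : ValidWordH l L) (hM : ValidWordH l M) :
    ValidWordH l (L ++ M) :=
  fun s hs => (List.mem_append.mp hs).elim (hL s) (hM s)

theorem ValidWordH.reverse (hL : ValidWordH l L) : ValidWordH l L.reverse :=
  fun s hs => hL s (List.mem_reverse.mp hs)

end ValidWordH

theorem InGamma.piRaw_pair {p l i j k : Fin 4} (hli : l ≠ i) (hlj : l ≠ j) (hlk : l ≠ k)
    (hp : p ≠ l) {t : Triple} (ht : InGamma i j k t) : InGamma i j k (piRaw {p, l} t) := by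
  revert p l i j k t; decide +kernel

theorem InGamma.word {l i j k : Fin 4} (hli : l ≠ i) (hlj : l ≠ j) (hlk : l ≠ k)
    {L : List (Finset (Fin 4))} (hL : ValidWordH l L) {t : Triple} (ht : InGamma i j k t) :
    InGamma i j k (word L t) := by
  induction L with
  | nil => exact ht
  | cons s L ih =>
    obtain ⟨p, hp, rfl⟩ := hL s List.mem_cons_self
    exact (ih fun s hs => hL s (List.mem_cons_of_mem _ hs)).piRaw_pair hli hlj hlk hp

def ReachableH (l : Fin 4) (t u : Triple) : Prop :=
  ∃ L, ValidWordH l L ∧ cyc (word L t) u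

theorem ReachableH.trans {l : Fin 4} {t u v : Triple} (ht : DistinctTriple t)
    (htu : ReachableH l t u) (huv : ReachableH l u v) : ReachableH l t v := by
  obtain ⟨L, hL, hLt⟩ := htu
  obtain ⟨M, hM, hMu⟩ := huv
  refine ⟨M ++ L, hM.append hL, ?_⟩
  rw [word_append]
  exact cyc_trans (cyc_word M (ht.word L) hLt) hMu

theorem ReachableH.symm {l : Fin 4} {t u : Triple} (ht : DistinctTriple t)
    (htu : ReachableH l t u) : ReachableH l u t := by
  obtain ⟨L, hL, hLt⟩ := htu
  exact ⟨L.reverse, hL.reverse,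
    cyc_trans (cyc_symm (cyc_word L.reverse (ht.word L) hLt)) (cyc_word_reverse_word L ht)⟩

theorem exists_cyc_word_le_two_of_inGamma {l i j k : Fin 4} (hli : l ≠ i) (hlj : l ≠ j)
    (hlk : l ≠ k) {u : Triple} (hu : InGamma i j k u) :
    ∃ a b : Fin 4, a ≠ l ∧ b ≠ l ∧
      (cyc (i, j, k) u ∨ cyc (piRaw {a, l} (i, j, k)) u ∨
        cyc (piRaw {a, l} (piRaw {b, l} (i, j, k))) u) := by
  revert l i j k u; decide +kernel

theorem reachableH_of_inGamma {l i j k : Fin 4} (hli : l ≠ i) (hlj : l ≠ j) (hlk : l ≠ k)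
    {u : Triple} (hu : InGamma i j k u) : ReachableH l (i, j, k) u := by
  obtain ⟨a, b, ha, hb, h | h | h⟩ := exists_cyc_word_le_two_of_inGamma hli hlj hlk hu
  · exact ⟨[], validWordH_nil, h⟩
  · exact ⟨[{a, l}], validWordH_nil.cons ha, h⟩
  · exact ⟨[{a, l}, {b, l}], (validWordH_nil.cons hb).cons ha, h⟩

theorem card_inGamma_normalized {i j k : Fin 4} (hij : i ≠ j) (hik : i ≠ k) (hjk : j ≠ k) :
    Fintype.card {t : Triple // InGamma i j k t ∧ t.1 < t.2.1 ∧ t.1 < t.2.2} = 4 := by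
  revert i j k; decide +kernel

/-- `Γ₄³(ijk)` is an orbit of `H_l` of size 4: it is `H_l`-stable, `H_l` acts
transitively on it, and it contains exactly 4 elements of `Γ₄³` (counted via the
canonical smallest-first representatives of cyclic classes). -/
theorem Hl_orbit (l i j k : Fin 4)
    (hli : l ≠ i) (hlj : l ≠ j) (hlk : l ≠ k)
    (hij : i ≠ j) (hik : i ≠ k) (hjk : j ≠ k) :
    (∀ t : Triple, InGamma i j k t → ∀ L, ValidWordH l L → InGamma i j k (word L t)) ∧
    (∀ t u : Triple, InGamma i j k t → InGamma i j k u →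
      ∃ L, ValidWordH l L ∧ cyc (word L t) u) ∧
    Nat.card {t : Triple // InGamma i j k t ∧ t.1 < t.2.1 ∧ t.1 < t.2.2} = 4 := by
  have hbase : DistinctTriple (i, j, k) := ⟨hij, hik, hjk⟩
  refine ⟨fun t ht L hL => ht.word hli hlj hlk hL, fun t u ht hu => ?_, ?_⟩
  · exact ((reachableH_of_inGamma hli hlj hlk ht).symm hbase).trans ht.1
      (reachableH_of_inGamma hli hlj hlk hu)
  · rw [Nat.card_eq_fintype_card]
    exact card_inGamma_normalized hij hik hjk
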